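/- Let $d \geq 1$ and let $F \subset \mathbb{R}^d$ be a compact convex set containing a Euclidean ball of radius $1/4$. Then for any unit vector $e \in \mathbb{R}^d$ and any $a \in (0,2]$, the Lebesgue measure of the set difference $(F + ae) \setminus F$ is at least $8^{-d} \theta_{d-1} a$, where $\theta_{d-1}$ is the volume of the unit ball in $\mathbb{R}^{d-1}$ and $F + ae$ denotes the translate of $F$ by the vector $ae$. -/

import Mathlib

/-! On each line parallel to `e`, a convex compact `F` is a segment `[α, β]`, and if `β - α ≥ a`
then `(F + a • e) \ F` contains the interval `(β, β + a)`. Lines parallel to `e` through the disc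
of radius `1/8` orthogonal to `e` at the centre of the inscribed ball meet `F` in segments of
length at least `1/4`; integrating over that disc (Fubini, in coordinates along `e` and `eᗮ`)
gives `|(F + a • e) \ F| ≥ a (1/8)^(d-1) θ_{d-1}` for `a ≤ 1/4`. For larger `a`, convexity makes
`s ↦ |(F + s • e) \ F|` nondecreasing, and `min a (1/4) ≥ a / 8` when `a ≤ 2`. -/

open MeasureTheory Metric Set

/-- `ubv n` is θ_n, the Lebesgue volume of the unit Euclidean ball in ℝ^n. -/
noncomputable def ubv (n : ℕ) : ℝ :=
  (volume (Metric.ball (0 : EuclideanSpace ℝ (Fin n)) 1)).toReal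

theorem measure_image_add_right {G : Type*} [MeasurableSpace G] [AddGroup G] [MeasurableAdd G]
    (μ : Measure G) [μ.IsAddRightInvariant] (g : G) (A : Set G) : μ ((· + g) '' A) = μ A := by
  rw [image_add_right, measure_preimage_add_right]

section Translate

variable {E : Type*} [AddCommGroup E] [Module ℝ E]

theorem Convex.image_add_smul_diff_subset {F : Set E} (hF : Convex ℝ F) (v : E) {s t : ℝ}
    (hs : 0 < s) (hst : s ≤ t) :
    (· + (t - s) • v) '' ((· + s • v) '' F \ F) ⊆ (· + t • v) '' F \ F := by
  rintro _ ⟨_, ⟨⟨x, hx, rfl⟩, hxs⟩, rfl⟩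
  have hxt : x + s • v + (t - s) • v = x + t • v := by rw [add_assoc, ← add_smul, add_sub_cancel]
  refine ⟨⟨x, hx, hxt.symm⟩, fun hxt' => hxs ?_⟩
  have ht : 0 < t := hs.trans_le hst
  replace hxt' : x + t • v ∈ F := by simpa only [hxt] using hxt'
  have h := hF.add_smul_mem hx hxt' (t := s / t) ⟨by positivity, (div_le_one ht).mpr hst⟩
  rwa [smul_smul, div_mul_cancel₀ _ ht.ne'] at h

theorem Convex.monotoneOn_measure_image_add_smul_diff [MeasurableSpace E] [MeasurableAdd E]
    (μ : Measure E) [μ.IsAddRightInvariant] {F : Set E} (hF : Convex ℝ F) (v : E) :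
    MonotoneOn (fun s : ℝ => μ ((· + s • v) '' F \ F)) (Ioi 0) := by
  intro s hs t _ hst
  calc μ ((· + s • v) '' F \ F) = μ ((· + (t - s) • v) '' ((· + s • v) '' F \ F)) :=
        (measure_image_add_right μ _ _).symm
    _ ≤ μ ((· + t • v) '' F \ F) := measure_mono (hF.image_add_smul_diff_subset v hs hst)

end Translate

theorem ofReal_le_volume_image_add_diff {T : Set ℝ} (hT : T.OrdConnected) (hbdd : BddAbove T)
    {t a : ℝ} (ht : t ∈ T) (hta : t + a ∈ T) :
    ENNReal.ofReal a ≤ volume ((· + a) '' T \ T) := by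
  set M := sSup T
  have hsub : Ioo M (M + a) ⊆ (· + a) '' T \ T := by
    rintro s ⟨hMs, hsMa⟩
    refine ⟨⟨s - a, ?_, sub_add_cancel s a⟩, fun hs => (le_csSup hbdd hs).not_gt hMs⟩
    obtain ⟨u, hu, hsu⟩ := exists_lt_of_lt_csSup ⟨t, ht⟩ (show s - a < M by linarith)
    exact hT.out ht hu ⟨by linarith [le_csSup hbdd hta], hsu.le⟩
  calc ENNReal.ofReal a = volume (Ioo M (M + a)) := by rw [Real.volume_Ioo, add_sub_cancel_left]
    _ ≤ _ := measure_mono hsub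

theorem image_add_prodMk_zero {V : Type*} [AddGroup V] (G : Set (ℝ × V)) (a : ℝ) :
    (· + (a, 0)) '' G = (fun p => (p.1 - a, p.2)) ⁻¹' G := by
  ext ⟨s, y⟩
  simp [image_add_right, sub_eq_add_neg]

theorem ofReal_mul_le_prod_image_add_diff {V : Type*} [AddGroup V] [MeasurableSpace V]
    (ν : Measure V) [SFinite ν] {G : Set (ℝ × V)} (hG : MeasurableSet G)
    (hconn : ∀ y, ((fun t => (t, y)) ⁻¹' G).OrdConnected)
    (hbdd : ∀ y, BddAbove ((fun t => (t, y)) ⁻¹' G))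
    {S : Set V} (hS : MeasurableSet S) {t a : ℝ} (hSG : ∀ y ∈ S, (t, y) ∈ G ∧ (t + a, y) ∈ G) :
    ENNReal.ofReal a * ν S ≤ (volume.prod ν) ((· + (a, 0)) '' G \ G) := by
  have hfiber (y : V) : (fun t => (t, y)) ⁻¹' ((· + (a, 0)) '' G \ G) =
      (· + a) '' ((fun t => (t, y)) ⁻¹' G) \ (fun t => (t, y)) ⁻¹' G := by
    ext s
    simp [image_add_right]
  have hmeas : MeasurableSet ((· + (a, 0)) '' G \ G) := by
    rw [image_add_prodMk_zero]
    exact (hG.preimage ((measurable_fst.sub_const a).prodMk measurable_snd)).diff hG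
  rw [Measure.prod_apply_symm hmeas, ← setLIntegral_const]
  calc ∫⁻ _ in S, ENNReal.ofReal a ∂ν
      ≤ ∫⁻ y in S, volume ((fun t => (t, y)) ⁻¹' ((· + (a, 0)) '' G \ G)) ∂ν :=
        setLIntegral_mono' hS fun y hy => hfiber y ▸
          ofReal_le_volume_image_add_diff (hconn y) (hbdd y) (hSG y hy).1 (hSG y hy).2
    _ ≤ _ := setLIntegral_le_lintegral _ _

theorem Convex.ordConnected_preimage_prodMk {V : Type*} [AddCommGroup V] [Module ℝ V]
    {G : Set (ℝ × V)} (hG : Convex ℝ G) (y : V) : ((fun t => (t, y)) ⁻¹' G).OrdConnected :=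
  Convex.ordConnected fun t₁ h₁ t₂ h₂ α β hα hβ hαβ => by
    simpa [← add_smul, hαβ] using hG h₁ h₂ hα hβ hαβ

section Split

variable {E : Type*} [NormedAddCommGroup E] [InnerProductSpace ℝ E] {e : E}

noncomputable def splitAlongUnitₗᵢ (e : E) (he : ‖e‖ = 1) : E ≃ₗᵢ[ℝ] WithLp 2 (ℝ × (ℝ ∙ e)ᗮ) :=
  (ℝ ∙ e).orthogonalDecomposition.trans
    (LinearIsometryEquiv.withLpProdCongr 2 (LinearIsometryEquiv.toSpanUnitSingleton e he).symm
      (LinearIsometryEquiv.refl ℝ _))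

noncomputable def splitAlongUnit (e : E) (he : ‖e‖ = 1) : E ≃L[ℝ] ℝ × (ℝ ∙ e)ᗮ :=
  (splitAlongUnitₗᵢ e he).toContinuousLinearEquiv.trans
    (WithLp.prodContinuousLinearEquiv 2 ℝ ℝ (ℝ ∙ e)ᗮ)

theorem splitAlongUnit_self (he : ‖e‖ = 1) : splitAlongUnit e he e = (1, 0) := by
  have hproj := (ℝ ∙ e).orthogonalProjectionOnto_mem_subspace_eq_self
    ⟨e, Submodule.mem_span_singleton_self e⟩
  simp [splitAlongUnit, splitAlongUnitₗᵢ, LinearIsometryEquiv.symm_apply_eq, hproj]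

theorem norm_sq_eq_splitAlongUnit (he : ‖e‖ = 1) (x : E) :
    ‖x‖ ^ 2 = (splitAlongUnit e he x).1 ^ 2 + ‖(splitAlongUnit e he x).2‖ ^ 2 := by
  rw [← (splitAlongUnitₗᵢ e he).norm_map, WithLp.prod_norm_sq_eq_of_L2, Real.norm_eq_abs, sq_abs]
  rfl

theorem measurePreserving_splitAlongUnit [FiniteDimensional ℝ E] [MeasurableSpace E]
    [BorelSpace E] (he : ‖e‖ = 1) : MeasurePreserving (splitAlongUnit e he) :=
  (WithLp.volume_preserving_ofLp ℝ (ℝ ∙ e)ᗮ).comp (splitAlongUnitₗᵢ e he).measurePreserving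

end Split

theorem Convex.ofReal_mul_volume_closedBall_le_volume_image_add_smul_diff
    {E : Type*} [NormedAddCommGroup E] [InnerProductSpace ℝ E] [FiniteDimensional ℝ E]
    [MeasurableSpace E] [BorelSpace E] {F : Set E} (hFconv : Convex ℝ F) (hFc : IsCompact F)
    {c : E} {r : ℝ} (hc : closedBall c r ⊆ F) {e : E} (he : ‖e‖ = 1) {a : ℝ} (ha : 0 ≤ a)
    (har : a ≤ r) :
    ENNReal.ofReal a * volume (closedBall (0 : (ℝ ∙ e)ᗮ) (r / 2)) ≤
      volume ((· + a • e) '' F \ F) := by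
  set Φ := splitAlongUnit e he
  set G := Φ '' F
  have hGc : IsCompact G := hFc.image Φ.continuous
  have hGconv : Convex ℝ G := hFconv.linear_image Φ.toLinearMap
  have hslab (s : ℝ) (y : (ℝ ∙ e)ᗮ) (hs : |s - (Φ c).1| ≤ r / 2)
      (hy : y ∈ closedBall (Φ c).2 (r / 2)) : (s, y) ∈ G := by
    refine ⟨Φ.symm (s, y), hc ?_, Φ.apply_symm_apply _⟩
    rw [mem_closedBall, dist_eq_norm] at hy ⊢
    rw [← sq_le_sq₀ (norm_nonneg _) (ha.trans har), norm_sq_eq_splitAlongUnit he, map_sub,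
      Φ.apply_symm_apply, Prod.fst_sub, Prod.snd_sub]
    nlinarith [sq_abs (s - (Φ c).1), abs_nonneg (s - (Φ c).1), norm_nonneg (y - (Φ c).2)]
  have hΦ (x : E) : Φ (x + a • e) = Φ x + (a, 0) := by
    simp [Φ, splitAlongUnit_self]
  have himage : Φ '' ((· + a • e) '' F \ F) = (· + (a, 0)) '' G \ G := by
    simp only [image_sdiff Φ.injective, image_image, hΦ, G]
  calc ENNReal.ofReal a * volume (closedBall (0 : (ℝ ∙ e)ᗮ) (r / 2))
      = ENNReal.ofReal a * volume (closedBall (Φ c).2 (r / 2)) := by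
        rw [Measure.addHaar_closedBall_center volume (Φ c).2]
    _ ≤ (volume.prod volume) ((· + (a, 0)) '' G \ G) :=
        ofReal_mul_le_prod_image_add_diff volume hGc.isClosed.measurableSet
          hGconv.ordConnected_preimage_prodMk
          (fun y => (hGc.image continuous_fst).bddAbove.mono
            fun _ ht => mem_image_of_mem Prod.fst ht)
          measurableSet_closedBall (t := (Φ c).1 - r / 2) fun y hy =>
            ⟨hslab _ y (by rw [abs_le]; constructor <;> linarith) hy,
              hslab _ y (by rw [abs_le]; constructor <;> linarith) hy⟩
    _ = volume ((· + a • e) '' F \ F) := by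
        rw [← himage, ← Measure.volume_eq_prod,
          ← (measurePreserving_splitAlongUnit he).measure_preimage_emb
            Φ.toHomeomorph.measurableEmbedding, preimage_image_eq _ Φ.injective]

theorem volume_ball_zero_one_eq_of_finrank_eq {V : Type*} [NormedAddCommGroup V]
    [InnerProductSpace ℝ V] [FiniteDimensional ℝ V] [MeasurableSpace V] [BorelSpace V] {n : ℕ}
    (hn : Module.finrank ℝ V = n) :
    volume (ball (0 : V) 1) = volume (ball (0 : EuclideanSpace ℝ (Fin n)) 1) := by
  let f := ((stdOrthonormalBasis ℝ V).reindex (finCongr hn)).repr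
  rw [← f.measurePreserving.measure_preimage measurableSet_ball.nullMeasurableSet,
    f.preimage_ball, map_zero]

theorem finrank_orthogonal_span_singleton_of_norm_eq_one {E : Type*} [NormedAddCommGroup E]
    [InnerProductSpace ℝ E] [FiniteDimensional ℝ E] {e : E} (he : ‖e‖ = 1) :
    Module.finrank ℝ (ℝ ∙ e)ᗮ = Module.finrank ℝ E - 1 := by
  have := (ℝ ∙ e).finrank_add_finrank_orthogonal
  rw [finrank_span_singleton (norm_ne_zero_iff.mp (he ▸ one_ne_zero))] at this
  omega

theorem volume_closedBall_orthogonal_span_singleton {d : ℕ} {e : EuclideanSpace ℝ (Fin d)}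
    (he : ‖e‖ = 1) {r : ℝ} (hr : 0 ≤ r) :
    volume (closedBall (0 : (ℝ ∙ e)ᗮ) r) = ENNReal.ofReal (r ^ (d - 1) * ubv (d - 1)) := by
  have hrank : Module.finrank ℝ (ℝ ∙ e)ᗮ = d - 1 := by
    rw [finrank_orthogonal_span_singleton_of_norm_eq_one he, finrank_euclideanSpace_fin]
  rw [Measure.addHaar_closedBall _ _ hr, volume_ball_zero_one_eq_of_finrank_eq hrank, hrank, ubv,
    ENNReal.ofReal_mul (by positivity), ENNReal.ofReal_toReal measure_ball_lt_top.ne]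

theorem translate_diff_volume_lower_bound
    (d : ℕ) (hd : 1 ≤ d) (F : Set (EuclideanSpace ℝ (Fin d)))
    (hFc : IsCompact F) (hFconv : Convex ℝ F)
    (hFball : ∃ c : EuclideanSpace ℝ (Fin d), Metric.closedBall c (1/4) ⊆ F)
    (e : EuclideanSpace ℝ (Fin d)) (he : ‖e‖ = 1)
    (a : ℝ) (ha : a ∈ Set.Ioc (0:ℝ) 2) :
    ENNReal.ofReal (((8:ℝ)^d)⁻¹ * ubv (d-1) * a)
      ≤ volume (((fun x => x + a • e) '' F) \ F) := by
  obtain ⟨ha0, ha2⟩ := ha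
  obtain ⟨c, hc⟩ := hFball
  set s := min a (1 / 4)
  have hs : 0 < s := lt_min ha0 (by norm_num)
  have h8 : ((8 : ℝ) ^ d)⁻¹ = (1 / 4 / 2) ^ (d - 1) * (1 / 8) := by
    rw [← Nat.sub_add_cancel hd, Nat.add_sub_cancel, pow_succ, mul_inv, ← inv_pow]
    norm_num
  calc ENNReal.ofReal ((8 ^ d)⁻¹ * ubv (d - 1) * a)
      ≤ ENNReal.ofReal s * volume (closedBall (0 : (ℝ ∙ e)ᗮ) (1 / 4 / 2)) := by
        rw [volume_closedBall_orthogonal_span_singleton he (by norm_num),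
          ← ENNReal.ofReal_mul hs.le, h8]
        refine ENNReal.ofReal_le_ofReal ?_
        have hu : 0 ≤ (1 / 4 / 2 : ℝ) ^ (d - 1) * ubv (d - 1) :=
          mul_nonneg (by positivity) ENNReal.toReal_nonneg
        have : a / 8 ≤ s := le_min (by linarith) (by linarith)
        nlinarith
    _ ≤ volume ((· + s • e) '' F \ F) :=
        hFconv.ofReal_mul_volume_closedBall_le_volume_image_add_smul_diff hFc hc he hs.le
          (min_le_right _ _)
    _ ≤ volume ((· + a • e) '' F \ F) :=
        hFconv.monotoneOn_measure_image_add_smul_diff volume e hs ha0 (min_le_left _ _)
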